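/- Every strictly locally testable language of width j ≥ 2 over an alphabet Σ is a maximal language of order k = 2j−1: given F_j ⊆ Σ^j defining L = Loc(F_j), there is a non-conflictual tagged k-word set Φ_k (obtained by inserting ⊙ between consecutive letters of internal j-words of F_j, and inserting a matching [ after the #-prefix and ] before the #-suffix for boundary j-words) such that Loc(F_j) = Red(Φ_k). -/

import Mathlib

/-!
Common framework from the paper "Higher-order Operator Precedence Languages":
tagged words over an alphabet `α` (with a distinguished end-mark letter
`hash`), the tag set Δ = {[, ], ⊙}, tagged `k`-word factors, conflictual sets,
the strictly-locally-testable tagged language `Loc(Φ)`, handles, reductions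
`⇝_Φ`, and the (tagged) maximal languages `RedBar Φ` / `Red Φ`.

Conventions: an end-word `⍟` is the alternating word `(#⊙)^m #` of (tagged)
length `k-2`, so that it contributes `(k-1)/2` end-marks on each side,
matching all the examples of the paper.
-/

namespace HOP

/-- The three tags `[`, `]`, `⊙`. -/
inductive Tagg : Type where
  | lb : Tagg
  | rb : Tagg
  | dot : Tagg
deriving DecidableEq

/-- Symbols: either a terminal letter of `α` or a tag. -/
abbrev Sym (α : Type) := α ⊕ Tagg

/-- The projection `σ` erasing all tags. -/
def erase {α : Type} (w : List (Sym α)) : List α := w.filterMap Sum.getLeft?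

/-- Tagged words: words in `Σ(ΔΣ)*`, i.e. alternating terminals and tags,
beginning and ending with a terminal. -/
inductive IsTagged {α : Type} : List (Sym α) → Prop where
  | single (a : α) : IsTagged [Sum.inl a]
  | cons (a : α) (t : Tagg) {w : List (Sym α)} :
      IsTagged w → IsTagged (Sum.inl a :: Sum.inr t :: w)

/-- `φ_k(w)`: the set of tagged `k`-words occurring as factors of `w`. -/
def taggedFactors {α : Type} (k : ℕ) (w : List (Sym α)) : Set (List (Sym α)) :=
  {u | u.length = k ∧ IsTagged u ∧ u <:+: w}

/-- A set of tagged words is conflictual iff it contains two distinct words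
with the same tag-erasure. -/
def Conflictual {α : Type} (S : Set (List (Sym α))) : Prop :=
  ∃ x ∈ S, ∃ y ∈ S, x ≠ y ∧ erase x = erase y

def NonConflictual {α : Type} (S : Set (List (Sym α))) : Prop := ¬ Conflictual S

/-- `S` is a set of tagged `k`-words. -/
def TaggedKWords {α : Type} (k : ℕ) (S : Set (List (Sym α))) : Prop :=
  ∀ u ∈ S, IsTagged u ∧ u.length = k

/-- `hashWord hash n = # ⊙ # ⊙ … #` with `n+1` end-marks (tagged length `2n+1`). -/
def hashWord {α : Type} (hash : α) : ℕ → List (Sym α)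
  | 0 => [Sum.inl hash]
  | n + 1 => Sum.inl hash :: Sum.inr Tagg.dot :: hashWord hash n

/-- The end-word `⍟ ∈ (#⊙)*#` used with width `k`: it has tagged length `k-2`
(for odd `k ≥ 3`), i.e. `(k-1)/2` end-marks. -/
def endwFor {α : Type} (hash : α) (k : ℕ) : List (Sym α) := hashWord hash ((k - 3) / 2)

/-- `wrap hash k w = ⍟ [ w ] ⍟`. -/
def wrap {α : Type} (hash : α) (k : ℕ) (w : List (Sym α)) : List (Sym α) :=
  endwFor hash k ++ Sum.inr Tagg.lb :: (w ++ Sum.inr Tagg.rb :: endwFor hash k)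

/-- `finalWord hash k = ⍟ ⊙ ⍟`, the target of a complete reduction. -/
def finalWord {α : Type} (hash : α) (k : ℕ) : List (Sym α) :=
  endwFor hash k ++ Sum.inr Tagg.dot :: endwFor hash k

/-- The (full-word form of the) `k`-strictly-locally-testable tagged language:
all tagged `k`-word factors belong to `Φ`.  A tagged word `w` is in `Loc(Φ)`
in the sense of the paper iff `wrap hash k w ∈ LocFull k Φ`. -/
def LocFull {α : Type} (k : ℕ) (Φ : Set (List (Sym α))) : Set (List (Sym α)) :=
  {w | IsTagged w ∧ taggedFactors k w ⊆ Φ}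

/-- `Loc(Φ)` as a set of tagged words `w` (tested on `⍟[w]⍟`). -/
def LocTagged {α : Type} (hash : α) (k : ℕ) (Φ : Set (List (Sym α))) :
    Set (List (Sym α)) :=
  {w | IsTagged w ∧ wrap hash k w ∈ LocFull k Φ}

/-- The body `x` of a handle `[x]`: a tagged word over `Σ - {#}` whose tags are
all `⊙`. -/
def IsHandleBody {α : Type} (hash : α) (x : List (Sym α)) : Prop :=
  IsTagged x ∧ (∀ t : Tagg, Sum.inr t ∈ x → t = Tagg.dot) ∧ Sum.inl hash ∉ x

/-- One reduction step `w[x]z ⇝_Φ w s z`, allowed when `[x]` is a handle and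
both source and target have all their tagged `k`-factors in `Φ`. -/
def RStep {α : Type} (hash : α) (k : ℕ) (Φ : Set (List (Sym α)))
    (u v : List (Sym α)) : Prop :=
  ∃ w x z, ∃ s : Tagg, IsHandleBody hash x ∧
    u = w ++ Sum.inr Tagg.lb :: (x ++ Sum.inr Tagg.rb :: z) ∧
    v = w ++ Sum.inr s :: z ∧
    u ∈ LocFull k Φ ∧ v ∈ LocFull k Φ

/-- `⇝*_Φ`. -/
def Reduces {α : Type} (hash : α) (k : ℕ) (Φ : Set (List (Sym α))) :
    List (Sym α) → List (Sym α) → Prop :=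
  Relation.ReflTransGen (RStep hash k Φ)

/-- The tagged maximal language `Red̄(Φ)`. -/
def RedBar {α : Type} (hash : α) (k : ℕ) (Φ : Set (List (Sym α))) :
    Set (List (Sym α)) :=
  {w | IsTagged w ∧ Reduces hash k Φ (wrap hash k w) (finalWord hash k)}

/-- The maximal language `Red(Φ) = σ(Red̄(Φ))`. -/
def Red {α : Type} (hash : α) (k : ℕ) (Φ : Set (List (Sym α))) : Set (List α) :=
  erase '' RedBar hash k Φ

/-- Length-`j` factors of a plain word. -/
def plainFactors {α : Type} (j : ℕ) (w : List α) : Set (List α) :=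
  {u | u.length = j ∧ u <:+: w}

/-- The `j`-strictly-locally-testable (plain) language `Loc(F)`, with
end-words `#^(j-1)`; as usual the language is `ε`-free and over `Σ - {#}`. -/
def LocPlain {α : Type} (hash : α) (j : ℕ) (F : Set (List α)) : Set (List α) :=
  {x | x ≠ [] ∧ hash ∉ x ∧
    plainFactors j
      (List.replicate (j - 1) hash ++ x ++ List.replicate (j - 1) hash) ⊆ F}

end HOP

namespace HOP

/-- `ũ`: insert `⊙` between consecutive letters of `u`. -/
def tilde {α : Type} : List α → List (Sym α)
  | [] => []
  | [a] => [Sum.inl a]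
  | a :: b :: rest => Sum.inl a :: Sum.inr Tagg.dot :: tilde (b :: rest)

/-- `(#⊙)^(n-1) # [` : the tagged `#`-prefix of a boundary word, followed by
the matching `[` (empty when `n = 0`). -/
def hpre {α : Type} (hash : α) : ℕ → List (Sym α)
  | 0 => []
  | n + 1 => hashWord hash n ++ [Sum.inr Tagg.lb]

/-- `] # (⊙#)^(n-1)` : the matching `]` followed by the tagged `#`-suffix of a
boundary word (empty when `n = 0`). -/
def hsuf {α : Type} (hash : α) : ℕ → List (Sym α)
  | 0 => []
  | n + 1 => Sum.inr Tagg.rb :: hashWord hash n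

/-- The tagged `(2j-1)`-word associated to the `j`-word `#^j1 v #^j2`. -/
def bt {α : Type} (hash : α) (j1 : ℕ) (v : List α) (j2 : ℕ) : List (Sym α) :=
  hpre hash j1 ++ tilde v ++ hsuf hash j2

/-- The tagged `(2j-1)`-word set `Φ_k` obtained from a `j`-word set `F_j`:
`⊙` is inserted between consecutive letters of the non-`#` part, and a
matching `[` (resp. `]`) is inserted after the `#`-prefix (resp. before the
`#`-suffix) of boundary `j`-words; the all-`#` word degenerately yields the
all-`#` tagged word `(#⊙)^(j-1)#`. -/
def sltPhi {α : Type} (hash : α) (j : ℕ) (F : Set (List α)) :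
    Set (List (Sym α)) :=
  {u | (∃ j1 v j2, j1 + v.length + j2 = j ∧ v ≠ [] ∧ hash ∉ v ∧
          (List.replicate j1 hash ++ v ++ List.replicate j2 hash) ∈ F ∧
          u = bt hash j1 v j2)
       ∨ u = hashWord hash (j - 1)}


/-!
Every word of `Φ_k` is the canonical tagging `tagWord p` of a `j`-word `p`: the tag between two
letters is determined by which of them is `#`. Hence `Φ_k` is non-conflictual. Canonicity of
tags is a property of the triples `a t b`, so a tagged word all of whose `k`-factors lie in `Φ_k`
is itself canonically tagged, and its `k`-factors are then exactly the taggings of the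
`j`-factors of its erasure.

For `x ∈ Loc(F_j)`, the word `⍟[tagWord x]⍟` is the canonical tagging of `#^(j-1) x #^(j-1)`,
so it lies in `Loc(Φ_k)` and one handle cancellation takes it to `⍟⊙⍟`. Conversely, handle
bodies contain no `#`, so a reduction `⍟[w]⍟ ⇝* ⍟⊙⍟` forces `σ(w)` to be `#`-free; its first
step shows `⍟[w]⍟ ∈ Loc(Φ_k)`, hence `⍟[w]⍟` is the canonical tagging of
`#^(j-1) σ(w) #^(j-1)`, whose `j`-factors must then all lie in `F_j`.
-/

section TaggedWords

variable {α : Type}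

@[simp] lemma erase_cons_inl (a : α) (l : List (Sym α)) :
    erase (Sum.inl a :: l) = a :: erase l := rfl

@[simp] lemma erase_cons_inr (t : Tagg) (l : List (Sym α)) :
    erase (Sum.inr t :: l) = erase l := rfl

@[simp] lemma erase_append (l₁ l₂ : List (Sym α)) :
    erase (l₁ ++ l₂) = erase l₁ ++ erase l₂ :=
  List.filterMap_append

@[simp] lemma mem_erase {a : α} {l : List (Sym α)} : a ∈ erase l ↔ Sum.inl a ∈ l := by
  simp [erase, List.mem_filterMap]

lemma erase_infix_erase {l₁ l₂ : List (Sym α)} (h : l₁ <:+: l₂) : erase l₁ <:+: erase l₂ :=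
  h.filterMap _

lemma IsTagged.exists_eq_cons {u : List (Sym α)} (h : IsTagged u) :
    ∃ a r, u = Sum.inl a :: r := by
  cases h <;> exact ⟨_, _, rfl⟩

lemma IsTagged.length_odd {u : List (Sym α)} (h : IsTagged u) : Odd u.length := by
  induction h with
  | single => simp
  | cons _ _ _ ih => simpa [Nat.odd_add_one, parity_simps] using ih

lemma IsTagged.take {u : List (Sym α)} (h : IsTagged u) {m : ℕ} (hm : Odd m)
    (hmu : m ≤ u.length) : IsTagged (u.take m) := by
  induction h generalizing m with
  | single a =>
    obtain rfl : m = 1 := by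
      obtain ⟨i, rfl⟩ := hm; simp only [List.length_singleton] at hmu; omega
    exact .single a
  | cons a t _ ih =>
    obtain ⟨i, rfl⟩ := hm
    rcases i with _ | i
    · exact .single a
    · rw [show 2 * (i + 1) + 1 = 2 * i + 1 + 1 + 1 by ring]
      exact .cons a t (ih ⟨i, rfl⟩ (by simp only [List.length_cons] at hmu; omega))

end TaggedWords

section TagWord

variable {α : Type} (hash : α)

open Classical in
/-- The only tag that can stand between the letters `a` and `b` in a word of `Φ_k`. -/
noncomputable def canonicalTag (a b : α) : Tagg :=
  if a = hash then (if b = hash then Tagg.dot else Tagg.lb)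
  else (if b = hash then Tagg.rb else Tagg.dot)

noncomputable def tagWord : List α → List (Sym α)
  | [] => []
  | [a] => [Sum.inl a]
  | a :: b :: l => Sum.inl a :: Sum.inr (canonicalTag hash a b) :: tagWord (b :: l)

@[simp] lemma tagWord_nil : tagWord hash ([] : List α) = [] := rfl

@[simp] lemma tagWord_singleton (a : α) : tagWord hash [a] = [Sum.inl a] := rfl

@[simp] lemma tagWord_cons_cons (a b : α) (l : List α) :
    tagWord hash (a :: b :: l) =
      Sum.inl a :: Sum.inr (canonicalTag hash a b) :: tagWord hash (b :: l) := rfl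

lemma tagWord_cons (a : α) (l : List α) : ∃ r, tagWord hash (a :: l) = Sum.inl a :: r := by
  cases l <;> exact ⟨_, rfl⟩

@[simp] lemma canonicalTag_hash_hash : canonicalTag hash hash hash = Tagg.dot := by
  simp [canonicalTag]

lemma canonicalTag_of_ne {a b : α} (ha : a ≠ hash) (hb : b ≠ hash) :
    canonicalTag hash a b = Tagg.dot := by
  simp [canonicalTag, ha, hb]

lemma length_tagWord : ∀ p : List α, (tagWord hash p).length = 2 * p.length - 1
  | [] => rfl
  | [_] => rfl
  | a :: b :: l => by
    simp only [tagWord_cons_cons, List.length_cons, length_tagWord (b :: l)]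
    omega

lemma isTagged_tagWord : ∀ {p : List α}, p ≠ [] → IsTagged (tagWord hash p)
  | [a], _ => .single a
  | a :: b :: l, _ => .cons a _ (isTagged_tagWord (List.cons_ne_nil b l))

@[simp] lemma erase_tagWord : ∀ p : List α, erase (tagWord hash p) = p
  | [] => rfl
  | [_] => rfl
  | a :: b :: l => by simp [erase_tagWord (b :: l)]

lemma tagWord_injective : Function.Injective (tagWord hash) :=
  Function.LeftInverse.injective (erase_tagWord hash)

lemma tagWord_prefix_append : ∀ l t : List α, tagWord hash l <+: tagWord hash (l ++ t)
  | [], _ => List.nil_prefix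
  | [a], t => by
    obtain ⟨r, hr⟩ := tagWord_cons hash a t
    simp [hr]
  | a :: b :: l, t => by simpa using tagWord_prefix_append (b :: l) t

lemma tagWord_suffix_cons (a : α) : ∀ l : List α, tagWord hash l <:+ tagWord hash (a :: l)
  | [] => List.nil_suffix
  | b :: l => by simpa using (List.suffix_cons _ _).trans (List.suffix_cons _ _)

lemma tagWord_suffix_append (l : List α) :
    ∀ s : List α, tagWord hash l <:+ tagWord hash (s ++ l)
  | [] => List.suffix_refl _
  | a :: s => (tagWord_suffix_append l s).trans (tagWord_suffix_cons hash a _)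

lemma tagWord_infix_tagWord {q p : List α} (h : q <:+: p) :
    tagWord hash q <:+: tagWord hash p := by
  obtain ⟨s, t, rfl⟩ := h
  exact (tagWord_prefix_append hash q t).isInfix.trans
    (by simpa using (tagWord_suffix_append hash (q ++ t) s).isInfix)

lemma tagWord_replicate :
    ∀ n : ℕ, tagWord hash (List.replicate (n + 1) hash) = hashWord hash n
  | 0 => rfl
  | n + 1 => by
    rw [List.replicate_succ, List.replicate_succ, tagWord_cons_cons, ← List.replicate_succ,
      tagWord_replicate n, canonicalTag_hash_hash, hashWord]

lemma tagWord_append_cons_cons (a b : α) (r : List α) : ∀ l : List α,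
    tagWord hash (l ++ a :: b :: r) =
      tagWord hash (l ++ [a]) ++ Sum.inr (canonicalTag hash a b) :: tagWord hash (b :: r)
  | [] => rfl
  | [c] => rfl
  | c :: d :: l => by
    simp only [List.cons_append, tagWord_cons_cons]
    rw [← List.cons_append, tagWord_append_cons_cons a b r (d :: l)]
    rfl

lemma tagWord_eq_tilde : ∀ {v : List α}, hash ∉ v → tagWord hash v = tilde v
  | [], _ => rfl
  | [_], _ => rfl
  | a :: b :: l, h => by
    simp only [List.mem_cons, not_or] at h
    rw [tagWord_cons_cons, canonicalTag_of_ne hash (Ne.symm h.1) (Ne.symm h.2.1),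
      tagWord_eq_tilde (List.not_mem_cons_of_ne_of_not_mem h.2.1 h.2.2)]
    rfl

lemma tagWord_replicate_append {a : α} (ha : a ≠ hash) (v : List α) : ∀ n : ℕ,
    tagWord hash (List.replicate n hash ++ a :: v) = hpre hash n ++ tagWord hash (a :: v)
  | 0 => rfl
  | n + 1 => by
    rw [List.replicate_succ', List.append_assoc, List.singleton_append,
      tagWord_append_cons_cons, ← List.replicate_succ', tagWord_replicate]
    simp [hpre, canonicalTag, ha]

lemma tagWord_append_replicate {a : α} (ha : a ≠ hash) (v : List α) : ∀ n : ℕ,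
    tagWord hash (v ++ [a] ++ List.replicate n hash) = tagWord hash (v ++ [a]) ++ hsuf hash n
  | 0 => by simp [hsuf]
  | n + 1 => by
    rw [List.replicate_succ, List.append_assoc, List.singleton_append,
      tagWord_append_cons_cons, ← List.replicate_succ, tagWord_replicate]
    simp [hsuf, canonicalTag, ha]

lemma tagWord_pad {v : List α} (hv : v ≠ []) (hnh : hash ∉ v) (j₁ j₂ : ℕ) :
    tagWord hash (List.replicate j₁ hash ++ v ++ List.replicate j₂ hash) = bt hash j₁ v j₂ := by
  obtain ⟨a, v₁, hv₁⟩ := List.exists_cons_of_ne_nil hv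
  obtain ⟨v₂, b, hv₂⟩ := (List.eq_nil_or_concat v).resolve_left hv
  rw [List.concat_eq_append] at hv₂
  have hne : ∀ c ∈ v, c ≠ hash := fun c hc h => hnh (h ▸ hc)
  rw [List.append_assoc, hv₁, List.cons_append,
    tagWord_replicate_append hash (hne a (by simp [hv₁])), ← List.cons_append, ← hv₁, hv₂,
    tagWord_append_replicate hash (hne b (by simp [hv₂])), ← hv₂, tagWord_eq_tilde hash hnh,
    bt, List.append_assoc]

end TagWord

section TagsCanonical

variable {α : Type} (hash : α)

def TagsCanonical (u : List (Sym α)) : Prop :=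
  ∀ a t b, [Sum.inl a, Sum.inr t, Sum.inl b] <:+: u → t = canonicalTag hash a b

variable {hash}

lemma TagsCanonical.mono {u v : List (Sym α)} (hv : TagsCanonical hash v) (h : u <:+: v) :
    TagsCanonical hash u :=
  fun a t b hab => hv a t b (hab.trans h)

lemma tagsCanonical_singleton (a : α) : TagsCanonical hash [Sum.inl a] :=
  fun _ _ _ h => absurd h.length_le (by simp)

lemma tagsCanonical_cons_cons_cons {a b : α} {t : Tagg} {r : List (Sym α)} :
    TagsCanonical hash (Sum.inl a :: Sum.inr t :: Sum.inl b :: r) ↔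
      t = canonicalTag hash a b ∧ TagsCanonical hash (Sum.inl b :: r) := by
  refine ⟨fun h => ⟨h a t b ⟨[], r, rfl⟩, h.mono (List.suffix_cons _ _ |>.trans
    (List.suffix_cons _ _)).isInfix⟩, fun ⟨hab, h⟩ a' t' b' hin => ?_⟩
  rcases List.infix_cons_iff.mp hin with hpre | hin
  · simp only [List.cons_prefix_cons, Sum.inl.injEq, Sum.inr.injEq] at hpre
    obtain ⟨rfl, rfl, rfl, -⟩ := hpre
    exact hab
  rcases List.infix_cons_iff.mp hin with hpre | hin
  · simp at hpre
  · exact h a' t' b' hin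

lemma tagsCanonical_tagWord : ∀ p : List α, TagsCanonical hash (tagWord hash p)
  | [] => fun _ _ _ h => absurd h.length_le (by simp)
  | [a] => tagsCanonical_singleton a
  | a :: b :: l => by
    obtain ⟨r, hr⟩ := tagWord_cons hash b l
    have ih := tagsCanonical_tagWord (b :: l)
    rw [hr] at ih
    rw [tagWord_cons_cons, hr]
    exact tagsCanonical_cons_cons_cons.mpr ⟨rfl, ih⟩

lemma TagsCanonical.eq_tagWord {u : List (Sym α)} (hu : IsTagged u)
    (hc : TagsCanonical hash u) : u = tagWord hash (erase u) := by
  induction hu with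
  | single a => rfl
  | cons a t hw ih =>
    obtain ⟨b, r, rfl⟩ := hw.exists_eq_cons
    obtain ⟨rfl, hbr⟩ := tagsCanonical_cons_cons_cons.mp hc
    simp only [erase_cons_inl, erase_cons_inr, tagWord_cons_cons]
    rw [← erase_cons_inl, ← ih hbr]

/-- Every triple `a t b` of `u` lies in a tagged factor of length `k`. -/
lemma tagsCanonical_of_taggedFactors {k : ℕ} (hk : Odd k) (hk3 : 3 ≤ k) {u : List (Sym α)}
    (hu : IsTagged u) (hlen : k ≤ u.length)
    (hfac : ∀ g ∈ taggedFactors k u, TagsCanonical hash g) : TagsCanonical hash u := by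
  induction hu with
  | single a => simp only [List.length_singleton] at hlen; omega
  | @cons a t w hw ih =>
    by_cases hkw : k ≤ w.length
    · obtain ⟨b, r, rfl⟩ := hw.exists_eq_cons
      have hwin : (Sum.inl a :: Sum.inr t :: Sum.inl b :: r).take k ∈
          taggedFactors k (Sum.inl a :: Sum.inr t :: Sum.inl b :: r) :=
        ⟨List.length_take_of_le hlen, (IsTagged.cons a t hw).take hk hlen,
          (List.take_prefix _ _).isInfix⟩
      refine tagsCanonical_cons_cons_cons.mpr ⟨hfac _ hwin a t b ?_, ih hkw fun g hg => ?_⟩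
      · obtain ⟨k', rfl⟩ : ∃ k', k = k' + 3 := ⟨k - 3, by omega⟩
        exact ⟨[], _, rfl⟩
      · exact hfac g ⟨hg.1, hg.2.1, hg.2.2.trans
          ((List.suffix_cons _ _).trans (List.suffix_cons _ _)).isInfix⟩
    · have hk_eq : k = w.length + 2 := by
        obtain ⟨i, hi⟩ := hk; obtain ⟨i', hi'⟩ := hw.length_odd
        simp only [List.length_cons] at hlen; omega
      exact hfac _ ⟨by simp [hk_eq], .cons a t hw, List.infix_refl _⟩

variable (hash)

lemma taggedFactors_tagWord {n : ℕ} (hn : 1 ≤ n) (p : List α) :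
    taggedFactors (2 * n - 1) (tagWord hash p) = tagWord hash '' plainFactors n p := by
  ext u
  constructor
  · rintro ⟨hlen, htag, hinf⟩
    have hu := ((tagsCanonical_tagWord p).mono hinf).eq_tagWord htag
    refine ⟨erase u, ⟨?_, by simpa using erase_infix_erase hinf⟩, hu.symm⟩
    have := length_tagWord hash (erase u)
    rw [← hu] at this
    omega
  · rintro ⟨q, ⟨hlen, hinf⟩, rfl⟩
    have hq : q ≠ [] := List.ne_nil_of_length_pos (by omega)
    exact ⟨by rw [length_tagWord, hlen], isTagged_tagWord hash hq,
      tagWord_infix_tagWord hash hinf⟩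

end TagsCanonical

section Phi

variable {α : Type} (hash : α) {j : ℕ} {F : Set (List α)}

def Padded (q : List α) : Prop :=
  ∃ j₁ v j₂, v ≠ [] ∧ hash ∉ v ∧ q = List.replicate j₁ hash ++ v ++ List.replicate j₂ hash

lemma padded_of_infix {x q : List α} {m : ℕ} (hx : x ≠ []) (hnh : hash ∉ x)
    (hq : q <:+: List.replicate m hash ++ x ++ List.replicate m hash) (hlen : m < q.length) :
    Padded hash q := by
  have short : ¬ q <:+: List.replicate m hash := fun h => by
    have := h.length_le; rw [List.length_replicate] at this; omega
  rcases List.infix_append_iff.mp hq with hq | hq | ⟨l₁, l₂, rfl, h₁, h₂⟩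
  · rcases List.infix_append_iff.mp hq with hq | hq | ⟨l₁, l₂, rfl, h₁, h₂⟩
    · exact (short hq).elim
    · exact ⟨0, q, 0, List.ne_nil_of_length_pos (by omega), fun h => hnh (hq.subset h),
        by simp⟩
    · have hl₂ : l₂ ≠ [] := by rintro rfl; exact short (by simpa using h₁.isInfix)
      rw [(List.suffix_replicate_iff.mp h₁).2]
      exact ⟨l₁.length, l₂, 0, hl₂, fun h => hnh (h₂.subset h), by simp⟩
  · exact (short hq).elim
  · rw [(List.prefix_replicate_iff.mp h₂).2]
    obtain ⟨s, hs⟩ := h₁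
    rcases List.append_eq_append_iff.mp hs with ⟨a, hR, rfl⟩ | ⟨c, -, rfl⟩
    · have ha : a <:+ List.replicate m hash := ⟨s, hR.symm⟩
      rw [(List.suffix_replicate_iff.mp ha).2]
      exact ⟨a.length, x, l₂.length, hx, hnh, by simp⟩
    · have hl₁ : l₁ ≠ [] := by rintro rfl; exact short (by simpa using h₂.isInfix)
      exact ⟨0, l₁, l₂.length, hl₁, fun h => hnh (by simp [h]), by simp⟩

lemma exists_tagWord_of_mem_sltPhi (hj : 1 ≤ j) {u : List (Sym α)}
    (hu : u ∈ sltPhi hash j F) : ∃ p : List α, p.length = j ∧ u = tagWord hash p := by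
  rcases hu with ⟨j₁, v, j₂, hsum, hv, hnh, -, rfl⟩ | rfl
  · exact ⟨_, by simp only [List.length_append, List.length_replicate]; omega,
      (tagWord_pad hash hv hnh j₁ j₂).symm⟩
  · exact ⟨List.replicate j hash, by simp, by rw [← tagWord_replicate, Nat.sub_add_cancel hj]⟩

lemma tagWord_mem_sltPhi_iff {q : List α} (hq : Padded hash q) (hlen : q.length = j) :
    tagWord hash q ∈ sltPhi hash j F ↔ q ∈ F := by
  obtain ⟨j₁, v, j₂, hv, hnh, rfl⟩ := hq
  refine ⟨fun h => ?_, fun h => .inl ⟨j₁, v, j₂, by simpa [add_assoc] using hlen, hv, hnh, h,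
    tagWord_pad hash hv hnh j₁ j₂⟩⟩
  rcases h with ⟨j₁', v', j₂', -, hv', hnh', hF, h⟩ | h
  · rw [← tagWord_pad hash hv' hnh', (tagWord_injective hash).eq_iff] at h
    rwa [h]
  · rw [← tagWord_replicate, Nat.sub_add_cancel (hlen ▸ List.length_pos_iff.mpr (by simp [hv])),
      (tagWord_injective hash).eq_iff, List.eq_replicate_iff] at h
    obtain ⟨a, ha⟩ := List.exists_mem_of_ne_nil v hv
    exact absurd (h.2 a (by simp [ha]) ▸ ha) hnh

lemma taggedKWords_sltPhi (hj : 1 ≤ j) : TaggedKWords (2 * j - 1) (sltPhi hash j F) := by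
  intro u hu
  obtain ⟨p, hp, rfl⟩ := exists_tagWord_of_mem_sltPhi hash hj hu
  exact ⟨isTagged_tagWord hash (List.ne_nil_of_length_pos (by omega)), by rw [length_tagWord, hp]⟩

lemma nonConflictual_sltPhi (hj : 1 ≤ j) : NonConflictual (sltPhi hash j F) := by
  rintro ⟨u, hu, v, hv, hne, herase⟩
  obtain ⟨p, -, rfl⟩ := exists_tagWord_of_mem_sltPhi hash hj hu
  obtain ⟨q, -, rfl⟩ := exists_tagWord_of_mem_sltPhi hash hj hv
  simp only [erase_tagWord] at herase
  exact hne (congrArg _ herase)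

end Phi

section LocFull

variable {α : Type} (hash : α) {j : ℕ} {F : Set (List α)}

abbrev padEnds (j : ℕ) (x : List α) : List α :=
  List.replicate (j - 1) hash ++ x ++ List.replicate (j - 1) hash

lemma tagWord_mem_locFull_iff (hj : 1 ≤ j) {x : List α} (hx : x ≠ []) (hnh : hash ∉ x) :
    tagWord hash (padEnds hash j x) ∈ LocFull (2 * j - 1) (sltPhi hash j F) ↔
      plainFactors j (padEnds hash j x) ⊆ F := by
  rw [LocFull, Set.mem_ofPred_eq, taggedFactors_tagWord hash hj, Set.image_subset_iff,
    and_iff_right (isTagged_tagWord hash (by simp [hx]))]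
  exact forall₂_congr fun q hq =>
    tagWord_mem_sltPhi_iff hash (padded_of_infix hash hx hnh hq.2 (by rw [hq.1]; omega)) hq.1

lemma hashWord_append_hashWord (m n : ℕ) :
    hashWord hash m ++ Sum.inr Tagg.dot :: hashWord hash n = hashWord hash (m + n + 1) := by
  induction m with
  | zero => simp [hashWord]
  | succ m ih => simp only [hashWord, List.cons_append, ih, Nat.add_right_comm m 1 n]

lemma lb_not_mem_hashWord : ∀ n : ℕ, Sum.inr Tagg.lb ∉ hashWord hash n
  | 0 => by simp [hashWord]
  | n + 1 => by simpa [hashWord] using lb_not_mem_hashWord n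

lemma endwFor_eq (hj : 2 ≤ j) : endwFor hash (2 * j - 1) = hashWord hash (j - 2) := by
  rw [endwFor, show (2 * j - 1 - 3) / 2 = j - 2 by omega]

lemma erase_endwFor (hj : 2 ≤ j) :
    erase (endwFor hash (2 * j - 1)) = List.replicate (j - 1) hash := by
  rw [endwFor_eq hash hj, ← tagWord_replicate, erase_tagWord, show j - 2 + 1 = j - 1 by omega]

lemma finalWord_eq_tagWord (hj : 2 ≤ j) :
    finalWord hash (2 * j - 1) = tagWord hash (List.replicate (2 * j - 2) hash) := by
  rw [finalWord, endwFor_eq hash hj, hashWord_append_hashWord, ← tagWord_replicate,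
    show j - 2 + (j - 2) + 1 + 1 = 2 * j - 2 by omega]

lemma finalWord_mem_locFull (hj : 2 ≤ j) :
    finalWord hash (2 * j - 1) ∈ LocFull (2 * j - 1) (sltPhi hash j F) := by
  rw [finalWord_eq_tagWord hash hj]
  refine ⟨isTagged_tagWord hash
    (List.ne_nil_of_length_pos (by rw [List.length_replicate]; omega)), ?_⟩
  rw [taggedFactors_tagWord hash (by omega)]
  rintro _ ⟨q, ⟨hlen, hq⟩, rfl⟩
  rw [(List.infix_replicate_iff.mp hq).2, hlen, ← Nat.sub_add_cancel (by omega : 1 ≤ j),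
    tagWord_replicate]
  exact .inr rfl

lemma wrap_tagWord (hj : 2 ≤ j) {x : List α} (hx : x ≠ []) (hnh : hash ∉ x) :
    wrap hash (2 * j - 1) (tagWord hash x) = tagWord hash (padEnds hash j x) := by
  rw [tagWord_pad hash hx hnh, wrap, bt, endwFor_eq hash hj, tagWord_eq_tilde hash hnh,
    show j - 1 = j - 2 + 1 by omega]
  simp [hpre, hsuf]

lemma erase_wrap (hj : 2 ≤ j) (w : List (Sym α)) :
    erase (wrap hash (2 * j - 1) w) = padEnds hash j (erase w) := by
  simp [wrap, erase_endwFor hash hj]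

lemma length_wrap (hj : 2 ≤ j) (w : List (Sym α)) :
    (wrap hash (2 * j - 1) w).length = 4 * j - 4 + w.length := by
  rw [wrap, endwFor_eq hash hj, ← tagWord_replicate]
  simp only [List.length_append, length_tagWord, List.length_replicate, List.length_cons]
  omega

end LocFull

section Reduction

variable {α : Type} (hash : α) {j : ℕ} {F : Set (List α)}

lemma tag_eq_dot_of_mem_tilde : ∀ {v : List α} {t : Tagg}, Sum.inr t ∈ tilde v → t = Tagg.dot
  | [], _, h | [_], _, h => by simp [tilde] at h
  | a :: b :: l, t, h => by
    simp only [tilde, List.mem_cons, reduceCtorEq, Sum.inr.injEq, false_or] at h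
    exact h.elim id tag_eq_dot_of_mem_tilde

lemma isHandleBody_tagWord {x : List α} (hx : x ≠ []) (hnh : hash ∉ x) :
    IsHandleBody hash (tagWord hash x) :=
  ⟨isTagged_tagWord hash hx,
    fun _ ht => tag_eq_dot_of_mem_tilde (tagWord_eq_tilde hash hnh ▸ ht),
    fun h => hnh (by simpa using mem_erase.mpr h)⟩

lemma locPlain_subset_red (hj : 2 ≤ j) :
    LocPlain hash j F ⊆ Red hash (2 * j - 1) (sltPhi hash j F) := by
  rintro x ⟨hx, hnh, hfac⟩
  refine ⟨tagWord hash x, ⟨isTagged_tagWord hash hx, .single ?_⟩, erase_tagWord hash x⟩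
  refine ⟨endwFor hash (2 * j - 1), tagWord hash x, endwFor hash (2 * j - 1), .dot,
    isHandleBody_tagWord hash hx hnh, rfl, rfl, ?_, finalWord_mem_locFull hash hj⟩
  rw [wrap_tagWord hash hj hx hnh]
  exact (tagWord_mem_locFull_iff hash (by omega) hx hnh).mpr hfac

lemma count_erase_eq_of_reduces [DecidableEq α] {k : ℕ} {Φ : Set (List (Sym α))}
    {u v : List (Sym α)} (h : Reduces hash k Φ u v) :
    (erase u).count hash = (erase v).count hash := by
  induction h with
  | refl => rfl
  | tail _ hstep ih =>
    obtain ⟨w, x, z, s, ⟨-, -, hx⟩, rfl, rfl, -, -⟩ := hstep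
    rw [ih]
    simp [List.count_eq_zero.mpr (mt mem_erase.mp hx)]

lemma hash_not_mem_erase_of_reduces (hj : 2 ≤ j) {Φ : Set (List (Sym α))} {w : List (Sym α)}
    (h : Reduces hash (2 * j - 1) Φ (wrap hash (2 * j - 1) w) (finalWord hash (2 * j - 1))) :
    hash ∉ erase w := by
  classical
  refine List.count_eq_zero.mp ?_
  simpa [erase_wrap hash hj, finalWord, erase_endwFor hash hj] using
    count_erase_eq_of_reduces hash h

lemma wrap_mem_locFull_of_reduces (hj : 2 ≤ j) {Φ : Set (List (Sym α))} {w : List (Sym α)}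
    (h : Reduces hash (2 * j - 1) Φ (wrap hash (2 * j - 1) w) (finalWord hash (2 * j - 1))) :
    wrap hash (2 * j - 1) w ∈ LocFull (2 * j - 1) Φ := by
  rcases h.cases_head with h | ⟨_, ⟨_, _, _, _, -, -, -, hloc, -⟩, -⟩
  · have : Sum.inr Tagg.lb ∈ finalWord hash (2 * j - 1) := h ▸ by simp [wrap]
    simp [finalWord, endwFor_eq hash hj, lb_not_mem_hashWord] at this
  · exact hloc

lemma wrap_eq_tagWord_of_mem_locFull (hj : 2 ≤ j) {w : List (Sym α)}
    (hloc : wrap hash (2 * j - 1) w ∈ LocFull (2 * j - 1) (sltPhi hash j F)) :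
    wrap hash (2 * j - 1) w = tagWord hash (padEnds hash j (erase w)) := by
  rw [← erase_wrap hash hj]
  refine TagsCanonical.eq_tagWord hloc.1 <| tagsCanonical_of_taggedFactors (k := 2 * j - 1)
    ⟨j - 1, by omega⟩ (by omega) hloc.1 (by rw [length_wrap hash hj]; omega) fun g hg => ?_
  obtain ⟨p, -, rfl⟩ := exists_tagWord_of_mem_sltPhi hash (by omega) (hloc.2 hg)
  exact tagsCanonical_tagWord p

lemma red_subset_locPlain (hj : 2 ≤ j) :
    Red hash (2 * j - 1) (sltPhi hash j F) ⊆ LocPlain hash j F := by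
  rintro _ ⟨w, ⟨hw, hred⟩, rfl⟩
  have hx : erase w ≠ [] := by
    obtain ⟨a, r, rfl⟩ := hw.exists_eq_cons
    exact List.cons_ne_nil _ _
  have hnh := hash_not_mem_erase_of_reduces hash hj hred
  have hloc := wrap_mem_locFull_of_reduces hash hj hred
  rw [wrap_eq_tagWord_of_mem_locFull hash hj hloc, tagWord_mem_locFull_iff hash (by omega) hx hnh]
    at hloc
  exact ⟨hx, hnh, hloc⟩

end Reduction

theorem slt_subset_maxtag_general {α : Type} (hash : α) {j : ℕ} (hj : 2 ≤ j)
    (F : Set (List α)) :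
    TaggedKWords (2 * j - 1) (sltPhi hash j F) ∧
    NonConflictual (sltPhi hash j F) ∧
    LocPlain hash j F = Red hash (2 * j - 1) (sltPhi hash j F) :=
  ⟨taggedKWords_sltPhi hash (by omega), nonConflictual_sltPhi hash (by omega),
    (locPlain_subset_red hash hj).antisymm (red_subset_locPlain hash hj)⟩

/-- **Theorem 2, inclusion SLT ⊆ maxtag**: every `j`-strictly-locally-testable
language (`j ≥ 2`) is a maximal language of order `k = 2j-1`, via the
non-conflictual tagged `k`-word set obtained from `F_j` as described. -/
theorem slt_subset_maxtag {α : Type} (hash : α) {j : ℕ} (hj : 2 ≤ j)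
    (F : Set (List α)) (hF : ∀ u ∈ F, u.length = j) :
    TaggedKWords (2 * j - 1) (sltPhi hash j F) ∧
    NonConflictual (sltPhi hash j F) ∧
    LocPlain hash j F = Red hash (2 * j - 1) (sltPhi hash j F) :=
  slt_subset_maxtag_general hash hj F

end HOP
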